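/- arXiv:1907.11670 — 5 statements merged into one kernel-verified Lean document; each statement's English description precedes it below -/
import Mathlib

section
/- Let α, β ∈ ℝ with α² - β² < 0, and set ρ_{1,2} = -α ± √(α² - β²) ∈ ℂ (so ρ_{1,2} = -α ± i√(β² - α²)). Then there exist positive constants C and R such that for all (τ,ξ) ∈ ℤ × ℤⁿ with |τ| + |ξ| ≥ R one has |τ - |ξ|ρ_1| · |τ - |ξ|ρ_2| ≥ C. In particular the symbol P(τ,ξ) = τ² + 2α τ|ξ| + β²|ξ|² of the operator D_t² - 2αD_t(-Δ_x)^{1/2} + β²Δ_x satisfies |P(τ,ξ)| ≥ C|(τ,ξ)|^{-M} for some C, M > 0 and all large |τ|+|ξ|, so the operator is globally hypoelliptic. -/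
open scoped BigOperators

/-- Euclidean norm of `ξ ∈ ℤⁿ`. -/
noncomputable def znorm {n : ℕ} (ξ : Fin n → ℤ) : ℝ :=
  Real.sqrt (∑ i, ((ξ i : ℝ)) ^ 2)

/-- Euclidean norm of `(τ, ξ) ∈ ℤ × ℤⁿ`. -/
noncomputable def pairNorm {n : ℕ} (τ : ℤ) (ξ : Fin n → ℤ) : ℝ :=
  Real.sqrt ((τ : ℝ) ^ 2 + ∑ i, ((ξ i : ℝ)) ^ 2)

/-! The roots `ρ₁, ρ₂` are non-real, so `|τ - |ξ|ρⱼ| ≥ |ξ|·|Im ρⱼ|`. On the lattice `ℤ × ℤⁿ`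
either `ξ = 0`, and then both factors equal `|τ| ≥ 1`, or `|ξ| ≥ 1`, and then the product is at
least `|Im ρ₁ · Im ρ₂|`. Since `P(τ, ξ) = (τ - |ξ|ρ₁)(τ - |ξ|ρ₂)` by Vieta, `|P|` is even bounded
below by a constant, which beats `C |(τ, ξ)|⁻¹` once `|(τ, ξ)| ≥ 1`. -/

section Lattice

variable {n : ℕ}

lemma znorm_eq_zero_or_one_le (ξ : Fin n → ℤ) : znorm ξ = 0 ∨ 1 ≤ znorm ξ := by
  by_cases hξ : ∀ i, ξ i = 0
  · left
    simp [znorm, hξ]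
  · right
    obtain ⟨i, hi⟩ := not_forall.mp hξ
    have hi_sq : (1 : ℝ) ≤ (ξ i : ℝ) ^ 2 := by
      rw [← sq_abs]
      exact one_le_pow₀ (by exact_mod_cast Int.one_le_abs hi)
    exact Real.one_le_sqrt.mpr <| hi_sq.trans <|
      Finset.single_le_sum (f := fun j => (ξ j : ℝ) ^ 2) (fun j _ => sq_nonneg _)
        (Finset.mem_univ i)

lemma znorm_eq_zero_and_one_le_abs_or_one_le_znorm {τ : ℤ} {ξ : Fin n → ℤ}
    (h : 1 ≤ |(τ : ℝ)| + znorm ξ) : (znorm ξ = 0 ∧ 1 ≤ |(τ : ℝ)|) ∨ 1 ≤ znorm ξ := by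
  rcases znorm_eq_zero_or_one_le ξ with hξ | hξ
  · exact Or.inl ⟨hξ, by linarith⟩
  · exact Or.inr hξ

lemma abs_le_pairNorm (τ : ℤ) (ξ : Fin n → ℤ) : |(τ : ℝ)| ≤ pairNorm τ ξ := by
  rw [← Real.sqrt_sq_eq_abs]
  exact Real.sqrt_le_sqrt <| le_add_of_nonneg_right <| Finset.sum_nonneg fun i _ => sq_nonneg _

lemma znorm_le_pairNorm (τ : ℤ) (ξ : Fin n → ℤ) : znorm ξ ≤ pairNorm τ ξ :=
  Real.sqrt_le_sqrt <| le_add_of_nonneg_left <| sq_nonneg _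

lemma one_le_pairNorm {τ : ℤ} {ξ : Fin n → ℤ} (h : 1 ≤ |(τ : ℝ)| + znorm ξ) :
    1 ≤ pairNorm τ ξ := by
  rcases znorm_eq_zero_and_one_le_abs_or_one_le_znorm h with ⟨-, hτ⟩ | hξ
  · exact hτ.trans (abs_le_pairNorm τ ξ)
  · exact hξ.trans (znorm_le_pairNorm τ ξ)

end Lattice

lemma abs_mul_im_le_norm_sub_mul (t s : ℝ) (ρ : ℂ) : |s * ρ.im| ≤ ‖(t : ℂ) - s * ρ‖ := by
  have him : ((t : ℂ) - s * ρ).im = -(s * ρ.im) := by simp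
  simpa [him] using Complex.abs_im_le_norm ((t : ℂ) - s * ρ)

lemma min_abs_im_mul_im_one_le_norm_mul_norm {t s : ℝ} (ρ₁ ρ₂ : ℂ)
    (h : (s = 0 ∧ 1 ≤ |t|) ∨ 1 ≤ s) :
    min |ρ₁.im * ρ₂.im| 1 ≤ ‖(t : ℂ) - s * ρ₁‖ * ‖(t : ℂ) - s * ρ₂‖ := by
  rcases h with ⟨rfl, ht⟩ | hs
  · simp only [Complex.ofReal_zero, zero_mul, sub_zero, Complex.norm_real, Real.norm_eq_abs]
    exact (min_le_right _ _).trans (one_le_mul_of_one_le_of_one_le ht ht)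
  · have hfactor : ∀ ρ : ℂ, |ρ.im| ≤ ‖(t : ℂ) - s * ρ‖ := fun ρ =>
      calc |ρ.im| ≤ |s * ρ.im| := by
            rw [abs_mul, abs_of_nonneg (zero_le_one.trans hs)]
            exact le_mul_of_one_le_left (abs_nonneg _) hs
        _ ≤ _ := abs_mul_im_le_norm_sub_mul t s ρ
    calc min |ρ₁.im * ρ₂.im| 1 ≤ |ρ₁.im| * |ρ₂.im| := (min_le_left _ _).trans (abs_mul _ _).le
      _ ≤ _ := mul_le_mul (hfactor ρ₁) (hfactor ρ₂) (abs_nonneg _) (norm_nonneg _)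

lemma sq_add_two_mul_mul_add_sq_mul_sq_eq_mul {a b ρ₁ ρ₂ : ℂ} (hsum : ρ₁ + ρ₂ = -2 * a)
    (hprod : ρ₁ * ρ₂ = b ^ 2) (τ s : ℂ) :
    τ ^ 2 + 2 * a * τ * s + b ^ 2 * s ^ 2 = (τ - s * ρ₁) * (τ - s * ρ₂) := by
  linear_combination (s * τ) * hsum - s ^ 2 * hprod

/-- For `α² - β² < 0` and the complex roots `ρ₁,₂ = -α ± i√(β² - α²)`, the product
`|τ - |ξ|ρ₁|·|τ - |ξ|ρ₂|` is bounded below by a positive constant for large `|τ| + |ξ|`;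
in particular the symbol `τ² + 2ατ|ξ| + β²|ξ|²` of `D_t² - 2αD_t(-Δ)^{1/2} + β²Δ`
satisfies the Greenfield–Wallach estimate, so the operator is globally hypoelliptic. -/
theorem wave_type_globally_hypoelliptic {n : ℕ} (α β : ℝ) (h : α ^ 2 - β ^ 2 < 0)
    (ρ₁ ρ₂ : ℂ)
    (hρ₁ : ρ₁ = -(α : ℂ) + Complex.I * (Real.sqrt (β ^ 2 - α ^ 2) : ℝ))
    (hρ₂ : ρ₂ = -(α : ℂ) - Complex.I * (Real.sqrt (β ^ 2 - α ^ 2) : ℝ)) :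
    (∃ C R : ℝ, 0 < C ∧ 0 < R ∧ ∀ (τ : ℤ) (ξ : Fin n → ℤ), R ≤ |(τ : ℝ)| + znorm ξ →
      C ≤ ‖(τ : ℂ) - (znorm ξ : ℝ) * ρ₁‖ *
            ‖(τ : ℂ) - (znorm ξ : ℝ) * ρ₂‖) ∧
    (∃ C M R : ℝ, 0 < C ∧ 0 < M ∧ 0 < R ∧
      ∀ (τ : ℤ) (ξ : Fin n → ℤ), R ≤ |(τ : ℝ)| + znorm ξ →
        C * pairNorm τ ξ ^ (-M) ≤
          ‖(τ : ℂ) ^ 2 + 2 * (α : ℂ) * (τ : ℂ) * (znorm ξ : ℝ) +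
            (β : ℂ) ^ 2 * ((znorm ξ : ℝ) : ℂ) ^ 2‖) := by
  set γ := Real.sqrt (β ^ 2 - α ^ 2)
  have hγ_pos : 0 < γ := Real.sqrt_pos.mpr (by linarith)
  have hγ_sq : (γ : ℂ) ^ 2 = β ^ 2 - α ^ 2 := by
    exact_mod_cast Real.sq_sqrt (by linarith : 0 ≤ β ^ 2 - α ^ 2)
  set C := min |ρ₁.im * ρ₂.im| 1
  have hC : 0 < C := lt_min (by simp [hρ₁, hρ₂, hγ_pos.ne']) one_pos
  have hbound : ∀ (τ : ℤ) (ξ : Fin n → ℤ), 1 ≤ |(τ : ℝ)| + znorm ξ →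
      C ≤ ‖(τ : ℂ) - (znorm ξ : ℝ) * ρ₁‖ * ‖(τ : ℂ) - (znorm ξ : ℝ) * ρ₂‖ := fun τ ξ hR => by
    exact_mod_cast min_abs_im_mul_im_one_le_norm_mul_norm ρ₁ ρ₂
      (znorm_eq_zero_and_one_le_abs_or_one_le_znorm hR)
  have hsum : ρ₁ + ρ₂ = -2 * α := by rw [hρ₁, hρ₂]; ring
  have hprod : ρ₁ * ρ₂ = β ^ 2 := by
    rw [hρ₁, hρ₂]; linear_combination hγ_sq - (γ : ℂ) ^ 2 * Complex.I_sq
  refine ⟨⟨C, 1, hC, one_pos, hbound⟩, C, 1, 1, hC, one_pos, one_pos, fun τ ξ hR => ?_⟩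
  rw [sq_add_two_mul_mul_add_sq_mul_sq_eq_mul hsum hprod, norm_mul]
  calc C * pairNorm τ ξ ^ (-1 : ℝ) ≤ C * 1 := mul_le_mul_of_nonneg_left
        (Real.rpow_le_one_of_one_le_of_nonpos (one_le_pairNorm hR) (by norm_num)) hC.le
    _ = C := mul_one C
    _ ≤ _ := hbound τ ξ hR
end

section
/- Let c : ℝ → ℂ be continuous and 2π-periodic with mean M₀, with e^{2πiM₀} ≠ 1, and suppose Im c(t) ≥ -η for all t, where η > 0. Let f be continuous 2π-periodic with sup norm ‖f‖_∞. Then the periodic solution u(t) = (e^{2πiM₀} - 1)^{-1} ∫₀^{2π} exp(i∫_t^{t+s} c(r)dr) f(t+s) ds of u' + icu = f satisfies the bound ‖u‖_∞ ≤ 2π e^{2πη} |e^{2πiM₀} - 1|^{-1} ‖f‖_∞. -/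
/-!
Since `‖exp (i ∫ₜ^{t+s} c)‖ = exp (-∫ₜ^{t+s} Im c)`, the condition `Im c ≥ -η` bounds the kernel
by `e^{ηs} ≤ e^{2πη}` for `0 ≤ s ≤ 2π`; a continuous periodic `f` is bounded by its supremum, and
the integral over `[0, 2π]` is at most `2π` times the sup of its integrand.
-/

open Complex

theorem Function.Periodic.norm_le_iSup_norm {E : Type*} [SeminormedAddGroup E] {f : ℝ → E}
    {p : ℝ} (hf : Function.Periodic f p) (hp : p ≠ 0) (hfc : Continuous f) (x : ℝ) :
    ‖f x‖ ≤ ⨆ s, ‖f s‖ :=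
  le_ciSup ((hf.comp norm).compact_of_continuous hp hfc.norm).bddAbove x

theorem norm_exp_I_mul_intervalIntegral_le {c : ℝ → ℂ} {η a b : ℝ}
    (hc : IntervalIntegrable c MeasureTheory.volume a b) (hab : a ≤ b)
    (him : ∀ t ∈ Set.Icc a b, -η ≤ (c t).im) :
    ‖exp (I * ∫ r in a..b, c r)‖ ≤ Real.exp (η * (b - a)) := by
  have him_int : ∫ r in a..b, (-η) ≤ ∫ r in a..b, (c r).im :=
    intervalIntegral.integral_mono_on hab intervalIntegrable_const
      ⟨hc.1.im, hc.2.im⟩ him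
  rw [norm_exp, I_mul_re, ← RCLike.im_eq_complex_im, ← intervalIntegral.intervalIntegral_im hc]
  gcongr
  simp only [intervalIntegral.integral_const, smul_eq_mul, RCLike.im_eq_complex_im] at him_int ⊢
  linarith

theorem apriori_bound_hormander_general (c f : ℝ → ℂ) (hc : Continuous c) (hf : Continuous f)
    (hfper : ∀ t, f (t + 2 * Real.pi) = f t)
    (η : ℝ) (hη : 0 < η) (him : ∀ t, -η ≤ (c t).im)
    (M₀ : ℂ)
    (u : ℝ → ℂ)
    (hu : ∀ t, u t = (Complex.exp (((2 * Real.pi : ℝ) : ℂ) * Complex.I * M₀) - 1)⁻¹ *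
      ∫ s in (0 : ℝ)..(2 * Real.pi),
        Complex.exp (Complex.I * ((∫ r in t..(t + s), c r : ℂ))) * f (t + s)) :
    ∀ t, ‖u t‖ ≤
      2 * Real.pi * Real.exp (2 * Real.pi * η) *
        (‖Complex.exp (((2 * Real.pi : ℝ) : ℂ) * Complex.I * M₀) - 1‖)⁻¹ *
        (⨆ s : ℝ, ‖f s‖) := by
  intro t
  have hπ : 0 < 2 * Real.pi := by positivity
  have integrand_le : ∀ s ∈ Set.uIoc 0 (2 * Real.pi),
      ‖exp (I * ∫ r in t..(t + s), c r) * f (t + s)‖ ≤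
        Real.exp (2 * Real.pi * η) * ⨆ s : ℝ, ‖f s‖ := by
    intro s hs
    rw [Set.uIoc_of_le hπ.le] at hs
    rw [norm_mul]
    gcongr
    · calc _ ≤ Real.exp (η * (t + s - t)) :=
            norm_exp_I_mul_intervalIntegral_le (hc.intervalIntegrable _ _)
              (by linarith [hs.1]) fun r _ => him r
        _ ≤ Real.exp (2 * Real.pi * η) := by
            rw [add_sub_cancel_left, mul_comm]
            gcongr
            exact hs.2
    · exact Function.Periodic.norm_le_iSup_norm hfper hπ.ne' hf _
  rw [hu t, norm_mul, norm_inv]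
  calc _ ≤ ‖exp (((2 * Real.pi : ℝ) : ℂ) * I * M₀) - 1‖⁻¹ *
        (Real.exp (2 * Real.pi * η) * (⨆ s : ℝ, ‖f s‖) * |2 * Real.pi - 0|) := by
        gcongr
        exact intervalIntegral.norm_integral_le_of_norm_le_const integrand_le
    _ = _ := by
        rw [sub_zero, abs_of_pos hπ]
        ring

/-- Under the Hörmander condition `Im c ≥ -η` and the nonresonance condition
`e^{2πiM₀} ≠ 1`, the periodic solution
`u(t) = (e^{2πiM₀} - 1)⁻¹ ∫₀^{2π} exp(i∫_t^{t+s} c) f(t+s) ds` of `u' + i c u = f`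
satisfies `‖u‖_∞ ≤ 2π e^{2πη} |e^{2πiM₀} - 1|⁻¹ ‖f‖_∞`. -/
theorem apriori_bound_hormander (c f : ℝ → ℂ) (hc : Continuous c) (hf : Continuous f)
    (hcper : ∀ t, c (t + 2 * Real.pi) = c t) (hfper : ∀ t, f (t + 2 * Real.pi) = f t)
    (η : ℝ) (hη : 0 < η) (him : ∀ t, -η ≤ (c t).im)
    (M₀ : ℂ) (hM₀ : M₀ = ((2 * Real.pi : ℝ) : ℂ)⁻¹ * ∫ t in (0 : ℝ)..(2 * Real.pi), c t)
    (hres : Complex.exp (((2 * Real.pi : ℝ) : ℂ) * Complex.I * M₀) ≠ 1)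
    (u : ℝ → ℂ)
    (hu : ∀ t, u t = (Complex.exp (((2 * Real.pi : ℝ) : ℂ) * Complex.I * M₀) - 1)⁻¹ *
      ∫ s in (0 : ℝ)..(2 * Real.pi),
        Complex.exp (Complex.I * ((∫ r in t..(t + s), c r : ℂ))) * f (t + s)) :
    ∀ t, ‖u t‖ ≤
      2 * Real.pi * Real.exp (2 * Real.pi * η) *
        (‖Complex.exp (((2 * Real.pi : ℝ) : ℂ) * Complex.I * M₀) - 1‖)⁻¹ *
        (⨆ s : ℝ, ‖f s‖) :=
  apriori_bound_hormander_general c f hc hf hfper η hη him M₀ u hu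
end

section
/- Let L_1, ..., L_m be continuous linear operators on 𝒟'(𝕋^N) preserving C^∞(𝕋^N), which pairwise commute: L_j L_k = L_k L_j for all j,k. If the composition L = L_1 ∘ ⋯ ∘ L_m is globally hypoelliptic, then each L_k is globally hypoelliptic. Conversely, if each L_k is globally hypoelliptic, then L is globally hypoelliptic (this direction does not need commutativity). -/
/-!
Writing `P = L₁ ⋯ L_m` in the monoid `Module.End ℂ V`, commutativity lets any factor `L_k` be
moved to the right: `P = Q * L_k`, where `Q` is the product of the other factors and preserves
`S`. Hence `L_k u ∈ S` gives `P u = Q (L_k u) ∈ S`, so `u ∈ S` when `P` is hypoelliptic.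
Conversely, hypoelliptic endomorphisms form a submonoid, so a product of them is hypoelliptic.
-/

theorem List.prod_eq_prod_erase_mul_of_commute {M : Type*} [Monoid M] [DecidableEq M]
    {l : List M} {a : M} (ha : a ∈ l) (hcomm : ∀ x ∈ l, ∀ y ∈ l, Commute x y) :
    l.prod = (l.erase a).prod * a :=
  calc l.prod = a * (l.erase a).prod := (List.prod_erase_of_comm ha hcomm).symm
    _ = (l.erase a).prod * a :=
      Commute.list_prod_right _ _ fun x hx => hcomm a ha x (List.mem_of_mem_erase hx)

namespace Submodule

variable {R V : Type*} [Semiring R] [AddCommMonoid V] [Module R V] (S : Submodule R V)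

def invariantSubmonoid : Submonoid (Module.End R V) where
  carrier := {T | ∀ u ∈ S, T u ∈ S}
  one_mem' := fun _ hu => hu
  mul_mem' := fun hT hT' u hu => hT _ (hT' u hu)

def hypoellipticSubmonoid : Submonoid (Module.End R V) where
  carrier := {T | ∀ u, T u ∈ S → u ∈ S}
  one_mem' := fun _ hu => hu
  mul_mem' := fun hT hT' u hu => hT' u (hT _ hu)

variable {S}

theorem mem_hypoellipticSubmonoid_of_mul_mem {A B : Module.End R V}
    (hA : A ∈ S.invariantSubmonoid) (hAB : A * B ∈ S.hypoellipticSubmonoid) :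
    B ∈ S.hypoellipticSubmonoid :=
  fun u hu => hAB u (hA _ hu)

end Submodule

open Submodule in
/-- Abstract form of Theorem 5(a): for pairwise commuting operators `L₁, …, L_m`
preserving the smooth subspace `S`, the composition `L = L₁ ∘ ⋯ ∘ L_m` is globally
hypoelliptic if and only if every factor `L_k` is globally hypoelliptic.  Here `V`
plays the role of `𝒟'(𝕋^N)` and `S` the role of `C^∞(𝕋^N)`. -/
theorem commuting_product_globally_hypoelliptic_iff
    (V : Type*) [AddCommGroup V] [Module ℂ V] (S : Submodule ℂ V)
    {m : ℕ} (L : Fin m → V →ₗ[ℂ] V)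
    (hL : ∀ j, ∀ u ∈ S, L j u ∈ S)
    (hcomm : ∀ j k, (L j) ∘ₗ (L k) = (L k) ∘ₗ (L j)) :
    (∀ u : V, ((List.ofFn L).foldr (fun f g => f ∘ₗ g) LinearMap.id) u ∈ S → u ∈ S) ↔
    (∀ k, ∀ u : V, L k u ∈ S → u ∈ S) := by
  classical
  set l := List.ofFn L
  change l.prod ∈ S.hypoellipticSubmonoid ↔ ∀ k, L k ∈ S.hypoellipticSubmonoid
  have hmem : ∀ f ∈ l, ∃ j, L j = f := fun f hf => List.mem_ofFn.mp hf
  constructor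
  · intro hprod k
    have hl_comm : ∀ x ∈ l, ∀ y ∈ l, Commute x y := by
      rintro _ hx _ hy
      obtain ⟨i, rfl⟩ := hmem _ hx
      obtain ⟨j, rfl⟩ := hmem _ hy
      exact hcomm i j
    have hrest : (l.erase (L k)).prod ∈ S.invariantSubmonoid :=
      Submonoid.list_prod_mem _ fun f hf => by
        obtain ⟨j, rfl⟩ := hmem f (List.mem_of_mem_erase hf)
        exact hL j
    rw [List.prod_eq_prod_erase_mul_of_commute (List.mem_ofFn.mpr ⟨k, rfl⟩) hl_comm] at hprod
    exact mem_hypoellipticSubmonoid_of_mul_mem hrest hprod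
  · intro hk
    exact Submonoid.list_prod_mem _ fun f hf => by
      obtain ⟨j, rfl⟩ := hmem f hf
      exact hk j
end

section
/- Let a, b : 𝕋 → ℝ be smooth, nonnegative, not identically zero, with disjoint supports, and define the symbol p(ξ) = α(ξ) + iβ(ξ) on ℤ by: α(ξ) = ξ^{-1} if ξ < 0 is odd, α(ξ) = |ξ| if ξ < 0 is even, α(ξ) = 0 if ξ ≥ 0; β(ξ) = 1 if ξ < 0, β(ξ) = ξ if ξ ≥ 0. Set ℳ(t,ξ) = (a(t) + i b(t)) p(ξ). Then: (1) Im ℳ(t,ξ) = a(t)β(ξ) + b(t)α(ξ) ≥ -η for all t ∈ 𝕋, ξ ∈ ℤ, where η = max_t b(t) > 0; (2) for every odd ξ < 0, the function t ↦ Im ℳ(t,ξ) attains both strictly positive and strictly negative values. -/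
/-- Example: with `a, b` smooth nonnegative `2π`-periodic, not identically zero, with
disjoint supports, and the symbol `p(ξ) = α(ξ) + iβ(ξ)` defined piecewise, the function
`ℳ(t,ξ) = (a(t) + i b(t)) p(ξ)` satisfies `Im ℳ(t,ξ) = a(t)β(ξ) + b(t)α(ξ) ≥ -η` with
`η = max b > 0`, while for every odd `ξ < 0` the function `t ↦ Im ℳ(t,ξ)` attains both
strictly positive and strictly negative values. -/
theorem hormander_example_sign_change
    (a b : ℝ → ℝ) (ha : ContDiff ℝ (⊤ : ℕ∞) a) (hb : ContDiff ℝ (⊤ : ℕ∞) b)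
    (haper : ∀ t, a (t + 2 * Real.pi) = a t) (hbper : ∀ t, b (t + 2 * Real.pi) = b t)
    (ha0 : ∀ t, 0 ≤ a t) (hb0 : ∀ t, 0 ≤ b t)
    (hane : ∃ t, a t ≠ 0) (hbne : ∃ t, b t ≠ 0)
    (hdisj : Disjoint (Function.support a) (Function.support b))
    (α β : ℤ → ℝ)
    (hα : ∀ ξ : ℤ, α ξ = if ξ < 0 then (if Odd ξ then ((ξ : ℝ))⁻¹ else |(ξ : ℝ)|) else 0)
    (hβ : ∀ ξ : ℤ, β ξ = if ξ < 0 then 1 else (ξ : ℝ))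
    (M : ℝ → ℤ → ℂ)
    (hM : ∀ t ξ, M t ξ =
      ((a t : ℂ) + Complex.I * (b t : ℂ)) * ((α ξ : ℂ) + Complex.I * (β ξ : ℂ)))
    (η : ℝ) (hη : IsGreatest (Set.range b) η) :
    0 < η ∧
    (∀ t ξ, (M t ξ).im = a t * β ξ + b t * α ξ) ∧
    (∀ t ξ, -η ≤ (M t ξ).im) ∧
    (∀ ξ : ℤ, ξ < 0 → Odd ξ →
      (∃ t, 0 < (M t ξ).im) ∧ (∃ t, (M t ξ).im < 0)) := by
  obtain ⟨tb, htb⟩ := hbne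
  have hble : ∀ t, b t ≤ η := fun t => hη.2 ⟨t, rfl⟩
  have hηpos : 0 < η := lt_of_lt_of_le ((hb0 tb).lt_of_ne (Ne.symm htb)) (hble tb)
  have him : ∀ t ξ, (M t ξ).im = a t * β ξ + b t * α ξ := by
    intro t ξ
    rw [hM]
    simp [Complex.add_im, Complex.mul_im]
  refine ⟨hηpos, him, ?_, ?_⟩
  · intro t ξ
    rw [him]
    have hβ0 : 0 ≤ β ξ := by
      rw [hβ]; split
      · norm_num
      · exact_mod_cast le_of_not_gt (by assumption)
    have h1 : 0 ≤ a t * β ξ := mul_nonneg (ha0 t) hβ0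
    have h2 : -η ≤ b t * α ξ := by
      rw [hα]
      split
      · rename_i hneg
        split
        · have hξle : (ξ : ℝ) ≤ -1 := by exact_mod_cast (by omega : ξ ≤ -1)
          have hξne : (ξ : ℝ) ≠ 0 := by intro h; rw [h] at hξle; linarith
          have hmul : (ξ : ℝ) * ((ξ : ℝ))⁻¹ = 1 := mul_inv_cancel₀ hξne
          have hinv : -1 ≤ ((ξ : ℝ))⁻¹ := by
            nlinarith [inv_nonpos.mpr (by linarith : (ξ : ℝ) ≤ 0)]
          calc -η ≤ -(b t) := neg_le_neg (hble t)
            _ = b t * (-1) := by ring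
            _ ≤ b t * ((ξ : ℝ))⁻¹ := mul_le_mul_of_nonneg_left hinv (hb0 t)
        · have : 0 ≤ b t * |(ξ:ℝ)| := mul_nonneg (hb0 t) (abs_nonneg _)
          linarith
      · simp; linarith
    linarith
  · intro ξ hξneg hξodd
    obtain ⟨ta, hta⟩ := hane
    have hbta : b ta = 0 := by
      by_contra h
      exact Set.disjoint_left.mp hdisj hta h
    have hatb : a tb = 0 := by
      by_contra h
      exact Set.disjoint_left.mp hdisj h htb
    have hαξ : α ξ = ((ξ : ℝ))⁻¹ := by rw [hα]; simp [hξneg, hξodd]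
    have hβξ : β ξ = 1 := by rw [hβ]; simp [hξneg]
    constructor
    · exact ⟨ta, by rw [him, hαξ, hβξ, hbta]; simpa using (ha0 ta).lt_of_ne (Ne.symm hta)⟩
    · refine ⟨tb, ?_⟩
      rw [him, hαξ, hβξ, hatb]
      have hinvneg : ((ξ : ℝ))⁻¹ < 0 := inv_lt_zero.mpr (by exact_mod_cast hξneg)
      have : 0 < b tb := (hb0 tb).lt_of_ne (Ne.symm htb)
      nlinarith
end

section
/- Let c : ℝ → ℂ be continuous 2π-periodic with mean M₀ and e^{2πiM₀} ≠ 1, and let f be continuous 2π-periodic. Then the two formulas u₊(t) = (e^{2πiM₀} - 1)^{-1} ∫₀^{2π} exp(i∫_t^{t+s} c(r)dr) f(t+s) ds and u₋(t) = (1 - e^{-2πiM₀})^{-1} ∫₀^{2π} exp(-i∫_{t-s}^t c(r)dr) f(t-s) ds define the same function, namely the unique 2π-periodic solution of u' + icu = f. -/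
/-!
With the integrating factor `E t = exp (i ∫₀ᵗ c)` the equation `u' + i c u = f` reads
`(E u)' = E f`, and periodicity of `c` gives `E (t + T) = E T * E t`, where
`E T = exp (i ∫₀ᵀ c) = e^{2πiM₀}`. The substitution `σ = t ± s` turns both formulas into
`(E t)⁻¹` times an integral of `E f` over a window of length `T`. As `E f` picks up the factor
`E T` under a shift by `T`, the backward window `[t - T, t]` carries the factor `(E T)⁻¹` relative
to the forward window `[t, t + T]`, and this is exactly compensated by the two prefactors.
For uniqueness, a periodic solution `d` of the homogeneous equation has `E d` constant, so
`d 0 = E T * d 0`, which forces `d = 0` since `E T ≠ 1`.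
-/

open Complex Function intervalIntegral

theorem integral_shift_eq_mul_of_map_add {𝕜 : Type*} [NormedDivisionRing 𝕜] [NormedAlgebra ℝ 𝕜]
    {g : ℝ → 𝕜} {T : ℝ} {k : 𝕜} (hg : ∀ x, g (x + T) = k * g x) (a b : ℝ) :
    ∫ x in (a + T)..(b + T), g x = k * ∫ x in a..b, g x := by
  simp_rw [← integral_comp_add_right g T, hg, integral_const_mul]

theorem hasDerivAt_integral_window {E : Type*} [NormedAddCommGroup E] [NormedSpace ℝ E]
    [CompleteSpace E] {g : ℝ → E} (hg : Continuous g) (T t : ℝ) :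
    HasDerivAt (fun s => ∫ x in s..(s + T), g x) (g (t + T) - g t) t := by
  have hprim : ∀ s, HasDerivAt (fun u => ∫ x in (0 : ℝ)..u, g x) (g s) s :=
    fun s => (hg.integral_hasStrictDerivAt 0 s).hasDerivAt
  have hdiff : (fun s => ∫ x in s..(s + T), g x) =
      fun s => (∫ x in (0 : ℝ)..(s + T), g x) - ∫ x in (0 : ℝ)..s, g x := by
    funext s
    exact (integral_interval_sub_left (hg.intervalIntegrable _ _) (hg.intervalIntegrable _ _)).symm
  rw [hdiff]
  exact ((hprim (t + T)).comp_add_const t T).sub (hprim t)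

theorem inv_one_sub_inv_eq {K : Type*} [Field K] {x : K} (hx : x ≠ 0) :
    (1 - x⁻¹)⁻¹ = (x - 1)⁻¹ * x := by
  have hfactor : 1 - x⁻¹ = (x - 1) * x⁻¹ := by field_simp
  rw [hfactor, mul_inv, inv_inv]

noncomputable def integratingFactor (c : ℝ → ℂ) (t : ℝ) : ℂ :=
  exp (I * ∫ r in (0 : ℝ)..t, c r)

section IntegratingFactor

variable {c : ℝ → ℂ}

@[simp]
theorem integratingFactor_zero : integratingFactor c 0 = 1 := by
  simp [integratingFactor]

theorem integratingFactor_ne_zero (t : ℝ) : integratingFactor c t ≠ 0 :=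
  exp_ne_zero _

theorem inv_integratingFactor (t : ℝ) :
    (integratingFactor c t)⁻¹ = exp (-(I * ∫ r in (0 : ℝ)..t, c r)) :=
  (exp_neg _).symm

theorem exp_I_mul_integral_eq (hc : Continuous c) (s t : ℝ) :
    exp (I * ∫ r in s..t, c r) = (integratingFactor c s)⁻¹ * integratingFactor c t := by
  rw [← integral_interval_sub_left (hc.intervalIntegrable 0 t) (hc.intervalIntegrable 0 s),
    mul_sub, exp_sub, div_eq_inv_mul, integratingFactor, integratingFactor]

theorem integratingFactor_add_period (hc : Continuous c) {T : ℝ} (hper : Periodic c T)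
    (t : ℝ) : integratingFactor c (t + T) = integratingFactor c t * integratingFactor c T := by
  have hshift : ∫ r in (0 : ℝ)..(t + T), c r =
      (∫ r in (0 : ℝ)..t, c r) + ∫ r in (0 : ℝ)..T, c r := by
    rw [← integral_add_adjacent_intervals (hc.intervalIntegrable 0 t) (hc.intervalIntegrable _ _),
      hper.intervalIntegral_add_eq t 0, zero_add]
  rw [integratingFactor, hshift, mul_add, exp_add, integratingFactor, integratingFactor]

theorem hasDerivAt_integratingFactor (hc : Continuous c) (t : ℝ) :
    HasDerivAt (integratingFactor c) (integratingFactor c t * (I * c t)) t :=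
  (((hc.integral_hasStrictDerivAt 0 t).hasDerivAt).const_mul I).cexp

theorem hasDerivAt_inv_integratingFactor (hc : Continuous c) (t : ℝ) :
    HasDerivAt (fun s => (integratingFactor c s)⁻¹)
      ((integratingFactor c t)⁻¹ * -(I * c t)) t := by
  simp_rw [inv_integratingFactor]
  exact (((hc.integral_hasStrictDerivAt 0 t).hasDerivAt).const_mul I).neg.cexp

end IntegratingFactor

section PeriodicSolution

variable {c f : ℝ → ℂ} {T : ℝ}

noncomputable def periodicSolution (c f : ℝ → ℂ) (T t : ℝ) : ℂ :=
  (integratingFactor c T - 1)⁻¹ *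
    ((integratingFactor c t)⁻¹ * ∫ σ in t..(t + T), integratingFactor c σ * f σ)

theorem integratingFactor_mul_add_period (hc : Continuous c) (hcper : Periodic c T)
    (hfper : Periodic f T) (σ : ℝ) :
    integratingFactor c (σ + T) * f (σ + T) =
      integratingFactor c T * (integratingFactor c σ * f σ) := by
  rw [integratingFactor_add_period hc hcper, hfper]
  ring

theorem forward_formula_eq (hc : Continuous c) (t : ℝ) :
    ∫ s in (0 : ℝ)..T, exp (I * ∫ r in t..(t + s), c r) * f (t + s) =
      (integratingFactor c t)⁻¹ * ∫ σ in t..(t + T), integratingFactor c σ * f σ := by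
  simp_rw [exp_I_mul_integral_eq hc, mul_assoc, integral_const_mul]
  rw [integral_comp_add_left (fun σ => integratingFactor c σ * f σ), add_zero]

theorem backward_formula_eq (hc : Continuous c) (t : ℝ) :
    ∫ s in (0 : ℝ)..T, exp (-(I * ∫ r in (t - s)..t, c r)) * f (t - s) =
      (integratingFactor c t)⁻¹ * ∫ σ in (t - T)..t, integratingFactor c σ * f σ := by
  simp_rw [exp_neg, exp_I_mul_integral_eq hc, mul_inv_rev, inv_inv, mul_assoc, integral_const_mul]
  rw [integral_comp_sub_left (fun σ => integratingFactor c σ * f σ), sub_zero]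

theorem periodicSolution_eq_backward (hc : Continuous c) (hcper : Periodic c T)
    (hfper : Periodic f T) (t : ℝ) :
    periodicSolution c f T t = (1 - (integratingFactor c T)⁻¹)⁻¹ *
      ((integratingFactor c t)⁻¹ * ∫ σ in (t - T)..t, integratingFactor c σ * f σ) := by
  have hwindow := integral_shift_eq_mul_of_map_add (g := fun σ => integratingFactor c σ * f σ)
    (integratingFactor_mul_add_period hc hcper hfper) (t - T) t
  rw [sub_add_cancel] at hwindow
  rw [periodicSolution, hwindow, inv_one_sub_inv_eq (integratingFactor_ne_zero T)]
  ring

theorem periodicSolution_periodic (hc : Continuous c) (hcper : Periodic c T)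
    (hfper : Periodic f T) : Periodic (periodicSolution c f T) T := by
  intro t
  have hwindow := integral_shift_eq_mul_of_map_add (g := fun σ => integratingFactor c σ * f σ)
    (integratingFactor_mul_add_period hc hcper hfper) t (t + T)
  rw [periodicSolution, periodicSolution, hwindow, integratingFactor_add_period hc hcper,
    mul_inv_rev, mul_assoc, mul_left_comm (integratingFactor c t)⁻¹,
    inv_mul_cancel_left₀ (integratingFactor_ne_zero T)]

theorem hasDerivAt_periodicSolution (hc : Continuous c) (hf : Continuous f) (hcper : Periodic c T)
    (hfper : Periodic f T) (hres : integratingFactor c T ≠ 1) (t : ℝ) :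
    HasDerivAt (periodicSolution c f T) (f t - I * c t * periodicSolution c f T t) t := by
  have hE : Continuous (integratingFactor c) :=
    continuous_iff_continuousAt.2 fun s => (hasDerivAt_integratingFactor hc s).continuousAt
  have hwindow := hasDerivAt_integral_window (g := fun s => integratingFactor c s * f s)
    (hE.mul hf) T t
  have hderiv := ((hasDerivAt_inv_integratingFactor hc t).mul hwindow).const_mul
    (integratingFactor c T - 1)⁻¹
  refine hderiv.congr_deriv ?_
  rw [integratingFactor_mul_add_period hc hcper hfper, periodicSolution]
  have hres' : integratingFactor c T - 1 ≠ 0 := sub_ne_zero.2 hres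
  field_simp [integratingFactor_ne_zero t]
  ring

theorem integratingFactor_mul_eq_of_hasDerivAt (hc : Continuous c) {d : ℝ → ℂ}
    (hd : ∀ t, HasDerivAt d (-(I * c t * d t)) t) (t : ℝ) :
    integratingFactor c t * d t = d 0 := by
  have hzero : ∀ s, HasDerivAt (fun s => integratingFactor c s * d s) 0 s := fun s =>
    ((hasDerivAt_integratingFactor hc s).mul (hd s)).congr_deriv (by ring)
  simpa only [integratingFactor_zero, one_mul] using
    is_const_of_deriv_eq_zero (fun s => (hzero s).differentiableAt) (fun s => (hzero s).deriv) t 0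

theorem eq_zero_of_periodic_of_hasDerivAt (hc : Continuous c) (hres : integratingFactor c T ≠ 1)
    {d : ℝ → ℂ} (hper : Periodic d T) (hd : ∀ t, HasDerivAt d (-(I * c t * d t)) t) : d = 0 := by
  have hd0 : d 0 = 0 := by
    have hT := integratingFactor_mul_eq_of_hasDerivAt hc hd T
    rw [← zero_add T, hper, zero_add] at hT
    have hfixed : (integratingFactor c T - 1) * d 0 = 0 := by linear_combination hT
    exact (mul_eq_zero.1 hfixed).resolve_left (sub_ne_zero.2 hres)
  funext t
  have ht := integratingFactor_mul_eq_of_hasDerivAt hc hd t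
  rw [hd0] at ht
  exact (mul_eq_zero.1 ht).resolve_left (integratingFactor_ne_zero t)

theorem periodic_solution_unique (hc : Continuous c) (hres : integratingFactor c T ≠ 1)
    {v w : ℝ → ℂ} (hvper : Periodic v T) (hv : ∀ t, HasDerivAt v (f t - I * c t * v t) t)
    (hwper : Periodic w T) (hw : ∀ t, HasDerivAt w (f t - I * c t * w t) t) : v = w := by
  refine sub_eq_zero.1 (eq_zero_of_periodic_of_hasDerivAt hc hres (hvper.sub hwper) fun t => ?_)
  exact ((hv t).sub (hw t)).congr_deriv (by simp only [Pi.sub_apply]; ring)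

end PeriodicSolution

/-- Remark 10: the forward and backward representation formulas
`uPlus(t) = (e^{2πiM₀} - 1)⁻¹ ∫₀^{2π} exp(i∫_t^{t+s} c) f(t+s) ds` and
`uMinus(t) = (1 - e^{-2πiM₀})⁻¹ ∫₀^{2π} exp(-i∫_{t-s}^t c) f(t-s) ds`
define the same function, the unique `2π`-periodic solution of `u' + i c u = f`. -/
theorem forward_backward_formulas_agree (c f : ℝ → ℂ)
    (hc : Continuous c) (hf : Continuous f)
    (hcper : ∀ t, c (t + 2 * Real.pi) = c t) (hfper : ∀ t, f (t + 2 * Real.pi) = f t)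
    (M₀ : ℂ) (hM₀ : M₀ = ((2 * Real.pi : ℝ) : ℂ)⁻¹ * ∫ t in (0 : ℝ)..(2 * Real.pi), c t)
    (hres : Complex.exp (((2 * Real.pi : ℝ) : ℂ) * Complex.I * M₀) ≠ 1)
    (uPlus uMinus : ℝ → ℂ)
    (huPlus : ∀ t, uPlus t = (Complex.exp (((2 * Real.pi : ℝ) : ℂ) * Complex.I * M₀) - 1)⁻¹ *
      ∫ s in (0 : ℝ)..(2 * Real.pi),
        Complex.exp (Complex.I * ((∫ r in t..(t + s), c r : ℂ))) * f (t + s))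
    (huMinus : ∀ t, uMinus t = (1 - Complex.exp (-(((2 * Real.pi : ℝ) : ℂ) * Complex.I * M₀)))⁻¹ *
      ∫ s in (0 : ℝ)..(2 * Real.pi),
        Complex.exp (-(Complex.I * ((∫ r in (t - s)..t, c r : ℂ)))) * f (t - s)) :
    uPlus = uMinus ∧
    (∀ t, uPlus (t + 2 * Real.pi) = uPlus t) ∧
    (∀ t, HasDerivAt uPlus (f t - Complex.I * c t * uPlus t) t) ∧
    (∀ v : ℝ → ℂ, (∀ t, v (t + 2 * Real.pi) = v t) →
      (∀ t, HasDerivAt v (f t - Complex.I * c t * v t) t) → v = uPlus) := by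
  have hmonodromy :
      exp (((2 * Real.pi : ℝ) : ℂ) * I * M₀) = integratingFactor c (2 * Real.pi) := by
    have h2π : ((2 * Real.pi : ℝ) : ℂ) ≠ 0 := by exact_mod_cast Real.two_pi_pos.ne'
    rw [hM₀, integratingFactor]
    field_simp
  rw [hmonodromy] at hres huPlus
  have hPlus : uPlus = periodicSolution c f (2 * Real.pi) := funext fun t => by
    rw [huPlus, forward_formula_eq hc, periodicSolution]
  have hMinus : uMinus = periodicSolution c f (2 * Real.pi) := funext fun t => by
    rw [huMinus, exp_neg (_ * M₀), hmonodromy, backward_formula_eq hc,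
      periodicSolution_eq_backward hc hcper hfper]
  subst hPlus hMinus
  have hper := periodicSolution_periodic hc hcper hfper
  have hderiv := hasDerivAt_periodicSolution hc hf hcper hfper hres
  exact ⟨rfl, hper, hderiv, fun v hvper hv => periodic_solution_unique hc hres hvper hv hper hderiv⟩
end
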